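/- Let X ≥ 0 be a nonnegative random variable with E[X^s] < ∞ for some s ∈ (0,1). Then E[X^s] = (2/π)·Γ(s+1)·cos(sπ/2) · ∫₀^∞ E[sin(tX)]/t^{s+1} dt, where the integral is a Lebesgue integral of an integrable function on (0,∞). -/

import Mathlib

open MeasureTheory Real Set Filter

namespace S4

variable {s : ℝ}

lemma asm_sin_div : AEStronglyMeasurable (fun u : ℝ => Real.sin u / u ^ (s + 1))
    (volume.restrict (Ioi 0)) := by
  refine (ContinuousOn.div Real.continuous_sin.continuousOn
    (continuousOn_id.rpow_const fun x hx => Or.inl (ne_of_gt hx))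
    (fun x hx => (rpow_pos_of_pos hx _).ne')).aestronglyMeasurable measurableSet_Ioi

lemma integrableOn_sin_div (hs1 : 0 < s) (hs2 : s < 1) :
    IntegrableOn (fun u : ℝ => Real.sin u / u ^ (s + 1)) (Ioi 0) := by
  rw [← Ioc_union_Ioi_eq_Ioi (zero_le_one : (0:ℝ) ≤ 1)]
  refine IntegrableOn.union ?_ ?_
  · have hint : IntegrableOn (fun u : ℝ => u ^ (-s)) (Ioc (0:ℝ) 1) := by
      have := intervalIntegral.intervalIntegrable_rpow' (a := 0) (b := 1)
        (show (-1:ℝ) < -s by linarith)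
      rwa [intervalIntegrable_iff_integrableOn_Ioc_of_le zero_le_one] at this
    refine hint.mono' (asm_sin_div.mono_set Ioc_subset_Ioi_self) ?_
    filter_upwards [ae_restrict_mem measurableSet_Ioc] with u hu
    have hu0 : 0 < u := hu.1
    rw [Real.norm_eq_abs, abs_div, abs_of_pos (rpow_pos_of_pos hu0 _),
      div_le_iff₀ (rpow_pos_of_pos hu0 _)]
    calc |Real.sin u| ≤ |u| := Real.abs_sin_le_abs
      _ = u := abs_of_pos hu0
      _ = u ^ (-s) * u ^ (s+1) := by
          rw [← rpow_add hu0]; norm_num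
  · have hint : IntegrableOn (fun u : ℝ => u ^ (-(s+1))) (Ioi (1:ℝ)) :=
      integrableOn_Ioi_rpow_of_lt (by linarith) one_pos
    refine hint.mono' (asm_sin_div.mono_set (Ioi_subset_Ioi zero_le_one)) ?_
    filter_upwards [ae_restrict_mem measurableSet_Ioi] with u hu
    have hu0 : (0:ℝ) < u := lt_trans one_pos hu
    rw [Real.norm_eq_abs, abs_div, abs_of_pos (rpow_pos_of_pos hu0 _), rpow_neg hu0.le,
      div_le_iff₀ (rpow_pos_of_pos hu0 _), inv_mul_cancel₀ (rpow_pos_of_pos hu0 _).ne']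
    exact Real.abs_sin_le_one u

lemma integrableOn_abs_sin_div (hs1 : 0 < s) (hs2 : s < 1) :
    IntegrableOn (fun u : ℝ => |Real.sin u| / u ^ (s + 1)) (Ioi 0) := by
  have h : IntegrableOn (fun u : ℝ => |Real.sin u / u ^ (s + 1)|) (Ioi 0) := (integrableOn_sin_div hs1 hs2).abs
  refine IntegrableOn.congr_fun h (fun u hu => ?_) measurableSet_Ioi
  rw [abs_div, abs_of_pos (rpow_pos_of_pos hu _)]

lemma key_scale {x : ℝ} (hx : 0 < x) (h : ℝ → ℝ)
    (hint : IntegrableOn (fun u => h u / u ^ (s+1)) (Ioi 0)) :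
    IntegrableOn (fun t => h (t*x) / t ^ (s+1)) (Ioi 0) ∧
    ∫ t in Ioi 0, h (t*x) / t ^ (s+1) = x ^ s * ∫ u in Ioi 0, h u / u ^ (s+1) := by
  set g := fun u : ℝ => h u / u ^ (s+1) with hgdef
  have hg : IntegrableOn (fun t => g (t*x)) (Ioi 0) := by
    have := (integrableOn_Ioi_comp_mul_right_iff g (0:ℝ) hx).mpr (by simpa using hint)
    simpa using this
  have heq : EqOn (fun t => h (t*x)/t ^ (s+1)) (fun t => x ^ (s+1) * g (t*x)) (Ioi 0) := by
    intro t ht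
    have ht0 : (0:ℝ) < t := ht
    simp only [hgdef]
    rw [mul_rpow ht0.le hx.le]
    have h1 : t ^ (s+1) ≠ 0 := (rpow_pos_of_pos ht0 _).ne'
    have h2 : x ^ (s+1) ≠ 0 := (rpow_pos_of_pos hx _).ne'
    field_simp
  have hI : IntegrableOn (fun t => h (t*x) / t ^ (s+1)) (Ioi 0) := by
    rw [integrableOn_congr_fun heq measurableSet_Ioi]
    exact hg.const_mul _
  refine ⟨hI, ?_⟩
  rw [setIntegral_congr_fun measurableSet_Ioi heq, integral_const_mul,
    integral_comp_mul_right_Ioi g 0 hx]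
  simp only [mul_zero, zero_mul, smul_eq_mul]
  rw [← mul_assoc]
  congr 1
  rw [rpow_add hx, rpow_one]
  field_simp

lemma laplace_sin {u : ℝ} (hu : 0 < u) :
    (∫ t in Ioi 0, Real.sin t * Real.exp (-(u * t))) = (1 + u^2)⁻¹ := by
  have hden : (0:ℝ) < 1 + u^2 := by positivity
  set F := fun t : ℝ => -(Real.exp (-(u * t)) * (u * Real.sin t + Real.cos t)) / (1 + u^2) with hF
  have hderiv : ∀ t : ℝ, HasDerivAt F (Real.sin t * Real.exp (-(u * t))) t := by
    intro t
    have h1 : HasDerivAt (fun t : ℝ => -(u * t)) (-u) t := by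
      have := ((hasDerivAt_id' t).const_mul u).neg; rwa [mul_one] at this
    have h2 : HasDerivAt (fun t : ℝ => Real.exp (-(u * t))) (Real.exp (-(u*t)) * (-u)) t :=
      (Real.hasDerivAt_exp _).comp t h1
    have h3 : HasDerivAt (fun t : ℝ => u * Real.sin t + Real.cos t)
        (u * Real.cos t - Real.sin t) t := by
      have := ((Real.hasDerivAt_sin t).const_mul u).add (Real.hasDerivAt_cos t)
      rw [← sub_eq_add_neg] at this; exact this
    have h4 := (h2.mul h3).neg.div_const (1 + u^2)
    refine h4.congr_deriv ?_
    rw [div_eq_iff hden.ne']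
    ring
  have hint : IntegrableOn (fun t => Real.sin t * Real.exp (-(u * t))) (Ioi 0) := by
    refine (exp_neg_integrableOn_Ioi 0 hu).mono'
      ((Real.continuous_sin.mul (Real.continuous_exp.comp (by continuity))).aestronglyMeasurable)
      ?_
    filter_upwards [ae_restrict_mem measurableSet_Ioi] with t _
    rw [Real.norm_eq_abs, abs_mul, abs_of_pos (Real.exp_pos _), neg_mul]
    exact mul_le_of_le_one_left (Real.exp_pos _).le (Real.abs_sin_le_one t)
  have hlim : Tendsto F atTop (nhds 0) := by
    have hb : Tendsto (fun t : ℝ => Real.exp (-(u * t))) atTop (nhds 0) := by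
      have h5 : Tendsto (fun t : ℝ => u * t) atTop atTop :=
        Tendsto.const_mul_atTop hu tendsto_id
      exact Real.tendsto_exp_neg_atTop_nhds_zero.comp h5
    have hbd : ∀ t : ℝ, ‖u * Real.sin t + Real.cos t‖ ≤ u + 1 := by
      intro t
      calc ‖u * Real.sin t + Real.cos t‖ ≤ ‖u * Real.sin t‖ + ‖Real.cos t‖ := norm_add_le _ _
        _ ≤ u * 1 + 1 := by
            gcongr
            · rw [Real.norm_eq_abs, abs_mul, abs_of_pos hu]
              exact mul_le_mul_of_nonneg_left (Real.abs_sin_le_one t) hu.le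
            · exact Real.abs_cos_le_one t
        _ = u + 1 := by ring
    have : Tendsto (fun t : ℝ => Real.exp (-(u * t)) * (u * Real.sin t + Real.cos t))
        atTop (nhds 0) := by
      have hsq : ∀ t:ℝ, ‖Real.exp (-(u * t)) * (u * Real.sin t + Real.cos t)‖
          ≤ Real.exp (-(u * t)) * (u+1) := by
        intro t
        rw [norm_mul, Real.norm_eq_abs (Real.exp _), abs_of_pos (Real.exp_pos _)]
        exact mul_le_mul_of_nonneg_left (hbd t) (Real.exp_pos _).le
      exact squeeze_zero_norm hsq (by simpa using hb.mul_const (u+1))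
    simpa [hF] using (this.neg).div_const (1 + u^2)
  have := integral_Ioi_of_hasDerivAt_of_tendsto
    (hderiv 0).continuousAt.continuousWithinAt (fun t _ => hderiv t) hint hlim
  rw [this, hF]
  norm_num
  rw [div_eq_inv_mul]
  simp

lemma integral_exp_neg_mul {c : ℝ} (hc : 0 < c) :
    ∫ v in Ioi (0:ℝ), Real.exp (-(c * v)) = c⁻¹ := by
  have := integral_comp_mul_left_Ioi (fun w => Real.exp (-w)) 0 hc
  simp only [mul_zero, smul_eq_mul] at this
  rw [this, integral_exp_neg_Ioi]
  simp

lemma integrableOn_exp_neg_mul {c : ℝ} (hc : 0 < c) :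
    IntegrableOn (fun v : ℝ => Real.exp (-(c * v))) (Ioi 0) := by
  simpa [neg_mul] using exp_neg_integrableOn_Ioi 0 hc

/-- integrability of `u ^ s / (1 + u ^ 2)` on `(0, ∞)` -/
lemma integrableOn_rpow_div (hs1 : 0 < s) (hs2 : s < 1) :
    IntegrableOn (fun u : ℝ => u ^ s * (1 + u^2)⁻¹) (Ioi 0) := by
  have hasm : AEStronglyMeasurable (fun u : ℝ => u ^ s * (1 + u^2)⁻¹)
      (volume.restrict (Ioi (0:ℝ))) := by
    refine ContinuousOn.aestronglyMeasurable ?_ measurableSet_Ioi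
    refine (continuousOn_id.rpow_const fun x hx => Or.inl (ne_of_gt hx)).mul
      (ContinuousOn.inv₀ (by fun_prop) fun x _ => by positivity)
  rw [← Ioc_union_Ioi_eq_Ioi (zero_le_one : (0:ℝ) ≤ 1)]
  refine IntegrableOn.union ?_ ?_
  · refine ((integrableOn_const_iff (C := (1:ℝ))).mpr (Or.inr measure_Ioc_lt_top)).mono'
      (hasm.mono_set Ioc_subset_Ioi_self) ?_
    filter_upwards [ae_restrict_mem measurableSet_Ioc] with u hu
    have hu0 : 0 < u := hu.1
    have h1 : u ^ s ≤ 1 := Real.rpow_le_one hu0.le hu.2 hs1.le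
    rw [Real.norm_eq_abs, abs_mul, abs_of_pos (rpow_pos_of_pos hu0 _),
      abs_of_pos (by positivity : (0:ℝ) < (1 + u^2)⁻¹)]
    have hinv : (1+u^2)⁻¹ ≤ (1:ℝ) := by
      rw [inv_le_one_iff₀]; right; nlinarith
    calc u ^ s * (1+u^2)⁻¹ ≤ 1 * 1 :=
          mul_le_mul h1 hinv (by positivity) zero_le_one
      _ = (1:ℝ) := by norm_num
  · have hint : IntegrableOn (fun u : ℝ => u ^ (s - 2)) (Ioi (1:ℝ)) :=
      integrableOn_Ioi_rpow_of_lt (by linarith) one_pos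
    refine hint.mono' (hasm.mono_set (Ioi_subset_Ioi zero_le_one)) ?_
    filter_upwards [ae_restrict_mem measurableSet_Ioi] with u hu
    have hu0 : (0:ℝ) < u := lt_trans one_pos hu
    rw [Real.norm_eq_abs, abs_mul, abs_of_pos (rpow_pos_of_pos hu0 _),
      abs_of_pos (by positivity : (0:ℝ) < (1 + u^2)⁻¹)]
    have heq2 : u ^ (s-2) = u ^ s * (u^2)⁻¹ := by
      rw [show s - 2 = s + (-2) by ring, rpow_add hu0, rpow_neg hu0.le]
      norm_num [rpow_two]
    rw [heq2]
    have hinv2 : (1+u^2)⁻¹ ≤ (u^2)⁻¹ := by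
      apply inv_anti₀ (by positivity)
      nlinarith
    exact mul_le_mul_of_nonneg_left hinv2 (rpow_pos_of_pos hu0 s).le

lemma gauss_int (hs1 : 0 < s) {v : ℝ} (hv : 0 < v) :
    ∫ u in Ioi (0:ℝ), u ^ s * Real.exp (-(v * u^2))
      = (1/2) * ((1/v) ^ ((s+1)/2) * Real.Gamma ((s+1)/2)) := by
  have hsub := integral_comp_rpow_Ioi_of_pos
    (g := fun u : ℝ => u ^ s * Real.exp (-(v * u^2))) (p := (1/2:ℝ)) (by norm_num)
  rw [← hsub]
  have heq : EqOn (fun x : ℝ => ((1/2:ℝ) * x ^ ((1/2:ℝ) - 1)) •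
      ((x ^ (1/2:ℝ)) ^ s * Real.exp (-(v * (x ^ (1/2:ℝ))^2))))
      (fun x : ℝ => (1/2:ℝ) * (x ^ ((s+1)/2 - 1) * Real.exp (-(v * x)))) (Ioi 0) := by
    intro x hx
    have hx0 : (0:ℝ) < x := hx
    have h1 : (x ^ (1/2:ℝ))^2 = x := by
      rw [← rpow_natCast (x ^ (1/2:ℝ)) 2, ← rpow_mul hx0.le]
      norm_num
    have h2 : (x ^ (1/2:ℝ)) ^ s = x ^ (s/2) := by
      rw [← rpow_mul hx0.le]; ring_nf
    simp only [smul_eq_mul, h1, h2]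
    rw [show (1/2:ℝ) - 1 = -(1/2) by norm_num, show (s+1)/2 - 1 = s/2 + (-(1/2)) by ring,
      rpow_add hx0]
    ring
  rw [setIntegral_congr_fun measurableSet_Ioi heq, integral_const_mul,
    integral_rpow_mul_exp_neg_mul_Ioi (by linarith : (0:ℝ) < (s+1)/2) hv]

lemma K_val (hs1 : 0 < s) (hs2 : s < 1) :
    ∫ u in Ioi (0:ℝ), u ^ s * (1 + u^2)⁻¹ = π / (2 * Real.cos (s * π / 2)) := by
  set ν := volume.restrict (Ioi (0:ℝ)) with hν
  set f : ℝ → ℝ → ℝ := fun u v => u ^ s * Real.exp (-((1 + u^2) * v)) with hf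
  have hasm : AEStronglyMeasurable (Function.uncurry f) (ν.prod ν) := by
    rw [hν, Measure.prod_restrict]
    refine ContinuousOn.aestronglyMeasurable ?_ (measurableSet_Ioi.prod measurableSet_Ioi)
    refine ContinuousOn.mul ?_ (Continuous.continuousOn (by fun_prop))
    exact (continuous_fst.continuousOn.rpow_const
      fun p hp => Or.inl (ne_of_gt (hp.1 : (0:ℝ) < p.1)))
  have hsec : ∀ᵐ u ∂ν, Integrable (fun v => f u v) ν := by
    filter_upwards [ae_restrict_mem measurableSet_Ioi] with u hu
    exact (integrableOn_exp_neg_mul (by positivity : (0:ℝ) < 1 + u^2)).const_mul _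
  have hnormeq : (fun u => ∫ v, ‖f u v‖ ∂ν) =ᵐ[ν] fun u => u ^ s * (1 + u^2)⁻¹ := by
    filter_upwards [ae_restrict_mem measurableSet_Ioi] with u hu
    have hu0 : (0:ℝ) < u := hu
    have h1 : ∀ v ∈ Ioi (0:ℝ), ‖f u v‖ = u ^ s * Real.exp (-((1 + u^2) * v)) := by
      intro v _
      rw [Real.norm_eq_abs, abs_mul, abs_of_pos (rpow_pos_of_pos hu0 _),
        abs_of_pos (Real.exp_pos _)]
    rw [hν, setIntegral_congr_fun measurableSet_Ioi h1, integral_const_mul,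
      integral_exp_neg_mul (by positivity : (0:ℝ) < 1 + u^2)]
  have hnormint : Integrable (fun u => ∫ v, ‖f u v‖ ∂ν) ν :=
    (integrableOn_rpow_div hs1 hs2).congr hnormeq.symm
  have hintF : Integrable (Function.uncurry f) (ν.prod ν) :=
    (integrable_prod_iff hasm).mpr ⟨hsec, hnormint⟩
  have hswap := integral_integral_swap (f := f) hintF
  have hLHS : ∫ u, (∫ v, f u v ∂ν) ∂ν = ∫ u in Ioi (0:ℝ), u ^ s * (1 + u^2)⁻¹ := by
    rw [hν]
    refine setIntegral_congr_fun measurableSet_Ioi fun u hu => ?_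
    have hu0 : (0:ℝ) < u := hu
    rw [hf]
    simp only []
    rw [integral_const_mul, integral_exp_neg_mul (by positivity : (0:ℝ) < 1 + u^2)]
  have hRHS : ∫ v, (∫ u, f u v ∂ν) ∂ν
      = (1/2) * Real.Gamma ((s+1)/2) * Real.Gamma ((1-s)/2) := by
    have h2 : ∀ v ∈ Ioi (0:ℝ), (∫ u, f u v ∂ν)
        = ((1/2) * Real.Gamma ((s+1)/2)) * (v ^ ((1-s)/2 - 1) * Real.exp (-(1 * v))) := by
      intro v hv
      have hv0 : (0:ℝ) < v := hv
      have h3 : ∀ u ∈ Ioi (0:ℝ), f u v = Real.exp (-v) * (u ^ s * Real.exp (-(v * u^2))) := by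
        intro u _
        rw [hf]
        simp only []
        rw [show -((1+u^2)*v) = -v + -(v * u^2) by ring, Real.exp_add]
        ring
      rw [hν, setIntegral_congr_fun measurableSet_Ioi h3, integral_const_mul,
        gauss_int hs1 hv0]
      rw [one_div v, inv_rpow hv0.le, ← rpow_neg hv0.le,
        show -((s+1)/2) = (1-s)/2 - 1 by ring]
      ring
    rw [hν, setIntegral_congr_fun measurableSet_Ioi h2, integral_const_mul,
      integral_rpow_mul_exp_neg_mul_Ioi (by linarith : (0:ℝ) < (1-s)/2) one_pos]
    norm_num
  rw [← hLHS, hswap, hRHS]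
  have hrefl := Real.Gamma_mul_Gamma_one_sub ((s+1)/2)
  rw [show (1:ℝ) - (s+1)/2 = (1-s)/2 by ring] at hrefl
  rw [mul_assoc, hrefl, show π * ((s+1)/2) = s * π / 2 + π/2 by ring,
    Real.sin_add_pi_div_two]
  ring

lemma gamma_rep (hs1 : 0 < s) {t : ℝ} (ht : 0 < t) :
    ∫ u in Ioi (0:ℝ), u ^ s * Real.exp (-(t*u)) = (t ^ (s+1))⁻¹ * Real.Gamma (s+1) := by
  have h := integral_rpow_mul_exp_neg_mul_Ioi (by linarith : (0:ℝ) < s+1) ht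
  rw [show (s+1) - 1 = s by ring] at h
  rw [h, one_div, inv_rpow ht.le]

lemma gamma_rep_integrable (hs1 : 0 < s) {t : ℝ} (ht : 0 < t) :
    IntegrableOn (fun u : ℝ => u ^ s * Real.exp (-(t*u))) (Ioi 0) := by
  have hf : IntegrableOn (fun v : ℝ => Real.exp (-v) * v ^ ((s+1)-1)) (Ioi 0) :=
    Real.GammaIntegral_convergent (by linarith : (0:ℝ) < s + 1)
  rw [show (s+1) - 1 = s by ring] at hf
  have h2 : IntegrableOn (fun u : ℝ => Real.exp (-(t*u)) * (t*u) ^ s) (Ioi 0) := by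
    have := (integrableOn_Ioi_comp_mul_left_iff
      (fun v : ℝ => Real.exp (-v) * v ^ s) (0:ℝ) ht).mpr (by simpa using hf)
    simpa using this
  refine IntegrableOn.congr_fun (h2.const_mul ((t ^ s)⁻¹)) (fun u hu => ?_) measurableSet_Ioi
  have hu0 : (0:ℝ) < u := hu
  rw [mul_rpow ht.le hu0.le]
  field_simp [(rpow_pos_of_pos ht s).ne']

lemma I_val (hs1 : 0 < s) (hs2 : s < 1) :
    Real.Gamma (s+1) * (∫ u in Ioi (0:ℝ), Real.sin u / u ^ (s+1))
      = π / (2 * Real.cos (s * π / 2)) := by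
  set ν := volume.restrict (Ioi (0:ℝ)) with hν
  set f : ℝ → ℝ → ℝ := fun t u => Real.sin t * (u ^ s * Real.exp (-(t * u))) with hf
  have hasm : AEStronglyMeasurable (Function.uncurry f) (ν.prod ν) := by
    rw [hν, Measure.prod_restrict]
    refine ContinuousOn.aestronglyMeasurable ?_ (measurableSet_Ioi.prod measurableSet_Ioi)
    refine Continuous.continuousOn (by fun_prop) |>.mul (ContinuousOn.mul ?_
      (Continuous.continuousOn (by fun_prop)))
    exact continuous_snd.continuousOn.rpow_const
      fun p hp => Or.inl (ne_of_gt (hp.2 : (0:ℝ) < p.2))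
  have hsec : ∀ᵐ t ∂ν, Integrable (fun u => f t u) ν := by
    filter_upwards [ae_restrict_mem measurableSet_Ioi] with t ht
    exact (gamma_rep_integrable hs1 ht).const_mul _
  have hnormeq : (fun t => ∫ u, ‖f t u‖ ∂ν)
      =ᵐ[ν] fun t => Real.Gamma (s+1) * (|Real.sin t| / t ^ (s+1)) := by
    filter_upwards [ae_restrict_mem measurableSet_Ioi] with t ht
    have ht0 : (0:ℝ) < t := ht
    have h1 : ∀ u ∈ Ioi (0:ℝ), ‖f t u‖ = |Real.sin t| * (u ^ s * Real.exp (-(t*u))) := by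
      intro u hu
      have hu0 : (0:ℝ) < u := hu
      rw [hf]
      simp only []
      rw [Real.norm_eq_abs, abs_mul, abs_mul, abs_of_pos (rpow_pos_of_pos hu0 _),
        abs_of_pos (Real.exp_pos _)]
    rw [hν, setIntegral_congr_fun measurableSet_Ioi h1, integral_const_mul,
      gamma_rep hs1 ht0]
    field_simp
  have hnormint : Integrable (fun t => ∫ u, ‖f t u‖ ∂ν) ν := by
    refine Integrable.congr ?_ hnormeq.symm
    exact (integrableOn_abs_sin_div hs1 hs2).const_mul _
  have hintF : Integrable (Function.uncurry f) (ν.prod ν) :=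
    (integrable_prod_iff hasm).mpr ⟨hsec, hnormint⟩
  have hswap := integral_integral_swap (f := f) hintF
  have hLHS : ∫ t, (∫ u, f t u ∂ν) ∂ν
      = Real.Gamma (s+1) * (∫ u in Ioi (0:ℝ), Real.sin u / u ^ (s+1)) := by
    rw [hν, ← integral_const_mul]
    refine setIntegral_congr_fun measurableSet_Ioi fun t ht => ?_
    have ht0 : (0:ℝ) < t := ht
    rw [hf]
    simp only []
    rw [integral_const_mul, gamma_rep hs1 ht0]
    field_simp
  have hRHS : ∫ u, (∫ t, f t u ∂ν) ∂ν = π / (2 * Real.cos (s * π / 2)) := by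
    rw [hν, ← K_val hs1 hs2]
    refine setIntegral_congr_fun measurableSet_Ioi fun u hu => ?_
    have hu0 : (0:ℝ) < u := hu
    have h3 : ∀ t ∈ Ioi (0:ℝ), f t u = u ^ s * (Real.sin t * Real.exp (-(u * t))) := by
      intro t _
      rw [hf]
      simp only []
      rw [mul_comm t u]
      ring
    rw [setIntegral_congr_fun measurableSet_Ioi h3, integral_const_mul, laplace_sin hu0]
  rw [← hLHS, hswap, hRHS]

end S4

open S4

theorem stmt4 {Ω : Type*} [MeasurableSpace Ω] (μ : Measure Ω) [IsProbabilityMeasure μ]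
    (X : Ω → ℝ) (hX : Measurable X) (hXnn : ∀ ω, 0 ≤ X ω) (s : ℝ)
    (hs1 : 0 < s) (hs2 : s < 1)
    (hint : Integrable (fun ω => X ω ^ s) μ) :
    IntegrableOn (fun t => (∫ ω, Real.sin (t * X ω) ∂μ) / t ^ (s + 1)) (Ioi (0 : ℝ)) volume
      ∧ ∫ ω, X ω ^ s ∂μ
        = 2 / π * Real.Gamma (s + 1) * Real.cos (s * π / 2)
          * ∫ t in Ioi (0 : ℝ), (∫ ω, Real.sin (t * X ω) ∂μ) / t ^ (s + 1) := by
  set ν := volume.restrict (Ioi (0:ℝ)) with hν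
  set I : ℝ := ∫ u in Ioi (0:ℝ), Real.sin u / u ^ (s+1) with hI
  set J : ℝ := ∫ u in Ioi (0:ℝ), |Real.sin u| / u ^ (s+1) with hJ
  set f : Ω → ℝ → ℝ := fun ω t => Real.sin (t * X ω) / t ^ (s+1) with hf
  -- measurability
  have hasm : AEStronglyMeasurable (Function.uncurry f) (μ.prod ν) := by
    have hnu : (μ.prod ν).map Prod.snd = ν := by
      rw [Measure.map_snd_prod]
      simp
    have hg : AEStronglyMeasurable (fun t : ℝ => (t ^ (s+1))⁻¹) ν := by
      refine ContinuousOn.aestronglyMeasurable ?_ measurableSet_Ioi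
      exact ContinuousOn.inv₀
        (continuousOn_id.rpow_const fun x hx => Or.inl (ne_of_gt hx))
        (fun x hx => (rpow_pos_of_pos hx _).ne')
    rw [← hnu] at hg
    have hB : AEStronglyMeasurable (fun p : Ω × ℝ => (p.2 ^ (s+1))⁻¹) (μ.prod ν) :=
      hg.comp_measurable measurable_snd
    have hA : AEStronglyMeasurable (fun p : Ω × ℝ => Real.sin (p.2 * X p.1)) (μ.prod ν) :=
      (Real.measurable_sin.comp (measurable_snd.mul (hX.comp measurable_fst))).aestronglyMeasurable
    refine (hA.mul hB).congr (Eventually.of_forall fun p => ?_)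
    simp [Function.uncurry, hf, div_eq_mul_inv]
  -- sections
  have hsec : ∀ ω, Integrable (fun t => f ω t) ν := by
    intro ω
    rcases (hXnn ω).eq_or_lt with h0 | hx
    · have hzero : (fun t => f ω t) = fun _ => (0:ℝ) := by
        funext t
        rw [hf]
        simp [← h0]
      rw [hzero]
      exact integrable_zero _ _ _
    · exact (key_scale hx Real.sin (integrableOn_sin_div hs1 hs2)).1
  -- norm sections value
  have hnormval : ∀ ω, (∫ t, ‖f ω t‖ ∂ν) = X ω ^ s * J := by
    intro ω
    rcases (hXnn ω).eq_or_lt with h0 | hx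
    · have hzero : (fun t => ‖f ω t‖) = fun _ => (0:ℝ) := by
        funext t
        rw [hf]
        simp [← h0]
      rw [← h0, zero_rpow hs1.ne', zero_mul, hzero, integral_zero]
    · have heq : ∀ t ∈ Ioi (0:ℝ), ‖f ω t‖ = |Real.sin (t * X ω)| / t ^ (s+1) := by
        intro t ht
        rw [hf]
        simp only []
        rw [Real.norm_eq_abs, abs_div, abs_of_pos (rpow_pos_of_pos ht _)]
      rw [hν, setIntegral_congr_fun measurableSet_Ioi heq,
        (key_scale hx (fun u => |Real.sin u|) (integrableOn_abs_sin_div hs1 hs2)).2]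
  have hnormint : Integrable (fun ω => ∫ t, ‖f ω t‖ ∂ν) μ := by
    refine Integrable.congr (hint.mul_const J) (Eventually.of_forall fun ω => ?_)
    exact (hnormval ω).symm
  have hF : Integrable (Function.uncurry f) (μ.prod ν) :=
    (integrable_prod_iff hasm).mpr ⟨Eventually.of_forall hsec, hnormint⟩
  -- first conjunct
  have h1 : Integrable (fun t => ∫ ω, f ω t ∂μ) ν := hF.integral_prod_right
  have h1' : IntegrableOn (fun t => (∫ ω, Real.sin (t * X ω) ∂μ) / t ^ (s + 1))
      (Ioi (0:ℝ)) volume := by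
    refine h1.congr (Eventually.of_forall fun t => ?_)
    rw [hf]
    simp only []
    rw [integral_div]
  refine ⟨h1', ?_⟩
  -- swap
  have hswap := integral_integral_swap (f := f) hF
  have hL : ∫ ω, (∫ t, f ω t ∂ν) ∂μ = (∫ ω, X ω ^ s ∂μ) * I := by
    rw [← integral_mul_const]
    refine integral_congr_ae (Eventually.of_forall fun ω => ?_)
    show (∫ t, f ω t ∂ν) = X ω ^ s * I
    rcases (hXnn ω).eq_or_lt with h0 | hx
    · have hzero : (fun t => f ω t) = fun _ => (0:ℝ) := by
        funext t
        rw [hf]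
        simp [← h0]
      rw [← h0, zero_rpow hs1.ne', zero_mul, hzero, integral_zero]
    · exact (key_scale hx Real.sin (integrableOn_sin_div hs1 hs2)).2
  have hR : ∫ t, (∫ ω, f ω t ∂μ) ∂ν
      = ∫ t in Ioi (0:ℝ), (∫ ω, Real.sin (t * X ω) ∂μ) / t ^ (s + 1) := by
    rw [hν]
    refine integral_congr_ae (Eventually.of_forall fun t => ?_)
    rw [hf]
    simp only []
    rw [integral_div]
  rw [← hR, ← hswap, hL]
  -- constant
  have hcos : 0 < Real.cos (s * π / 2) := by
    apply Real.cos_pos_of_mem_Ioo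
    constructor
    · nlinarith [Real.pi_pos]
    · nlinarith [Real.pi_pos]
  have hgamma : Real.Gamma (s+1) ≠ 0 := (Real.Gamma_pos_of_pos (by linarith)).ne'
  have hIval := I_val hs1 hs2
  have hc1 : 2 / π * Real.Gamma (s + 1) * Real.cos (s * π / 2) * I = 1 := by
    have hpi : (0:ℝ) < π := Real.pi_pos
    field_simp at hIval ⊢
    nlinarith [hIval]
  calc ∫ ω, X ω ^ s ∂μ = (2 / π * Real.Gamma (s + 1) * Real.cos (s * π / 2) * I)
        * ∫ ω, X ω ^ s ∂μ := by rw [hc1, one_mul]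
    _ = 2 / π * Real.Gamma (s + 1) * Real.cos (s * π / 2) * ((∫ ω, X ω ^ s ∂μ) * I) := by ring
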